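/- For every n ≥ 1, every ε > 0 and every infinite subset L ⊆ ℕ there exist a finite set F ⊆ L and scalars (a_i)_{i∈F} ⊆ [0,1] such that: F ∈ S_n and F is a maximal S_n-subset of L (i.e. F ∪ {m} ∉ S_n for every m ∈ L with m > max F); Σ_{i∈F} a_i = 1; and Σ_{i∈G} a_i < ε for every G ∈ S_{n−1}. In other words, Σ_{i∈F} a_i e_i is an (n, ε)-basic special convex combination supported on a maximal S_n-subset of L. -/

import Mathlib

open Finset

noncomputable section


/-- Minimum of a finite set of naturals (`0` for the empty set). -/
def fmin (E : Finset ℕ) : ℕ := sInf (E : Set ℕ)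

/-- Maximum of a finite set of naturals (`0` for the empty set). -/
def fmax (E : Finset ℕ) : ℕ := E.sup id

/-- The Schreier families `S_n`:  `S_0` consists of singletons and the empty set, and
`S_{n+1}` consists of unions `F_1 ∪ ⋯ ∪ F_k` of successive members of `S_n` with
`k ≤ min F_1` (equivalently, `k ≤ min (F_1 ∪ ⋯ ∪ F_k)`). -/
def Schreier : ℕ → Set (Finset ℕ)
  | 0 => {F | F.card ≤ 1}
  | n + 1 => {F | ∃ (k : ℕ) (G : Fin k → Finset ℕ),
      F = Finset.univ.biUnion G ∧
      (∀ i, G i ∈ Schreier n) ∧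
      (∀ i, (G i).Nonempty) ∧
      (∀ i j : Fin k, i < j → ∀ a ∈ G i, ∀ b ∈ G j, a < b) ∧
      (∀ a ∈ F, k ≤ a)}

/-
Induction on `n`, building `S_{n+1}`-combinations from maximal `S_n`-blocks `B₀ < B₁ < ⋯` in `L`
with convex weights `b_j`, chosen so that `b_{j+1}` gives weight at most `2^{-(j+1)}` to every
`S_n`-set that starts at or below `max B_j`. For `n = 0` the blocks are singletons; for `n ≥ 1` they
are `(n, δ)`-combinations with `δ` tiny compared to `max B_j`, since an `S_n`-set `G` is a union of
at most `min G` sets of `S_{n-1}`. With `k = min B₀`, the set `F = B₀ ∪ ⋯ ∪ B_{k-1}` lies in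
`S_{n+1}` and carries the weights `b_j / k`. It is maximal: if `F ∪ {x} = H₀ ∪ ⋯ ∪ H_{r-1}` with
`r ≤ k`, then inductively `max H_i ≤ max B_i`, since otherwise `H_i` would contain `B_i` together
with a point above `max B_i`. An `S_n`-set first meets some block `B_{j₀}`, of weight at most `1`,
and each later block `B_j` contributes at most `2^{-j}`, so it has weight at most `3 / k`, which is
small once `min B₀` is large.
-/

lemma fmin_mem {E : Finset ℕ} (h : E.Nonempty) : fmin E ∈ E := by
  have := Nat.sInf_mem (s := (E : Set ℕ)) (by exact_mod_cast h.to_set)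
  exact_mod_cast this

lemma fmin_le {E : Finset ℕ} {a : ℕ} (ha : a ∈ E) : fmin E ≤ a :=
  Nat.sInf_le (by exact_mod_cast ha)

lemma le_fmax {E : Finset ℕ} {a : ℕ} (ha : a ∈ E) : a ≤ fmax E :=
  le_sup (f := id) ha

lemma fmax_mem {E : Finset ℕ} (h : E.Nonempty) : fmax E ∈ E := by
  obtain ⟨i, hi, hie⟩ := exists_mem_eq_sup E h id
  rwa [fmax, hie]

def Successive {ι : Type*} [LT ι] (B : ι → Finset ℕ) : Prop :=
  ∀ ⦃i j⦄, i < j → ∀ a ∈ B i, ∀ b ∈ B j, a < b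

def IsMaximalIn (S : Set (Finset ℕ)) (F : Finset ℕ) : Prop :=
  F ∈ S ∧ ∀ x, fmax F < x → insert x F ∉ S

namespace Successive

variable {B : ℕ → Finset ℕ}

lemma disjoint {ι : Type*} [LinearOrder ι] {B : ι → Finset ℕ} (hB : Successive B) {i j : ι}
    (h : i ≠ j) : Disjoint (B i) (B j) :=
  disjoint_left.2 fun a hi hj => h.lt_or_gt.elim
    (fun h => (hB h a hi a hj).false) (fun h => (hB h a hj a hi).false)

lemma of_fmax_lt (hne : ∀ j, (B j).Nonempty) (h : ∀ j, ∀ x ∈ B (j + 1), fmax (B j) < x) :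
    Successive B := by
  have key : ∀ i j, i < j → ∀ x ∈ B j, fmax (B i) < x := by
    intro i j hij
    induction j, hij using Nat.le_induction with
    | base => exact h i
    | succ j _ ih => exact fun x hx => (ih _ (fmax_mem (hne j))).trans (h j x hx)
  exact fun i j hij a ha b hb => (le_fmax ha).trans_lt (key i j hij b hb)

lemma fmax_le_fmax (hB : Successive B) (hne : ∀ j, (B j).Nonempty) {i j : ℕ} (h : i ≤ j) :
    fmax (B i) ≤ fmax (B j) := by
  rcases h.eq_or_lt with rfl | h
  · exact le_rfl
  · exact (hB h _ (fmax_mem (hne i)) _ (fmax_mem (hne j))).le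

lemma fmin_le (hB : Successive B) (hne : (B 0).Nonempty) {j a : ℕ} (ha : a ∈ B j) :
    fmin (B 0) ≤ a := by
  rcases j.eq_zero_or_pos with rfl | hj
  · exact _root_.fmin_le ha
  · exact (hB hj _ (fmin_mem hne) _ ha).le

end Successive

lemma biUnion_mem_schreier_succ {ι : Type*} [LinearOrder ι] {n : ℕ} (T : Finset ι)
    {G : ι → Finset ℕ} (hG : ∀ i ∈ T, G i ∈ Schreier n) (hne : ∀ i ∈ T, (G i).Nonempty)
    (hsucc : Successive G) (hcard : ∀ a ∈ T.biUnion G, #T ≤ a) :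
    T.biUnion G ∈ Schreier (n + 1) := by
  let e := T.orderIsoOfFin rfl
  refine ⟨#T, fun i => G (e i), ?_, fun i => hG _ (e i).2, fun i => hne _ (e i).2,
    fun i j h => hsucc (e.lt_iff_lt.2 h), hcard⟩
  ext x
  simp only [mem_biUnion, mem_univ, true_and]
  constructor
  · rintro ⟨i, hi, hx⟩
    exact ⟨e.symm ⟨i, hi⟩, by simpa using hx⟩
  · rintro ⟨j, hx⟩
    exact ⟨e j, (e j).2, hx⟩

theorem isLowerSet_schreier : ∀ n, IsLowerSet (Schreier n)
  | 0 => fun _ _ h hE => (card_le_card h).trans hE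
  | n + 1 => by
    classical
    rintro E E' hE'E ⟨k, G, rfl, hG, -, hsucc, hk⟩
    let T := univ.filter fun i => (G i ∩ E').Nonempty
    have hE' : E' = T.biUnion fun i => G i ∩ E' := by
      ext x
      simp only [T, mem_biUnion, mem_filter, mem_univ, true_and, mem_inter]
      constructor
      · intro hx
        obtain ⟨i, -, hxi⟩ := mem_biUnion.1 (hE'E hx)
        exact ⟨i, ⟨x, mem_inter.2 ⟨hxi, hx⟩⟩, hxi, hx⟩
      · exact fun ⟨_, _, _, hx⟩ => hx
    rw [hE']
    refine biUnion_mem_schreier_succ T (fun i _ => isLowerSet_schreier n inter_subset_left (hG i))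
      (fun i hi => (mem_filter.1 hi).2)
      (fun i j h a ha b hb => hsucc i j h a (mem_inter.1 ha).1 b (mem_inter.1 hb).1) ?_
    intro a ha
    rw [← hE'] at ha
    exact (card_le_univ T).trans (by simpa using hk a (hE'E ha))

lemma sum_inter_le_of_mem_schreier_succ {n : ℕ} {G B : Finset ℕ} {b : ℕ → ℝ} {δ : ℝ}
    (hG : G ∈ Schreier (n + 1)) (hδ : 0 ≤ δ) (hB : ∀ P ∈ Schreier n, ∑ i ∈ P ∩ B, b i ≤ δ)
    {w : ℕ} (hw : w ∈ G) : ∑ i ∈ G ∩ B, b i ≤ w * δ := by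
  obtain ⟨d, P, rfl, hP, -, hsucc, hd⟩ := hG
  have hsucc : Successive P := fun i j h => hsucc i j h
  rw [biUnion_inter, sum_biUnion fun i _ j _ h => (hsucc.disjoint h).mono inter_subset_left
    inter_subset_left]
  calc ∑ i, ∑ x ∈ P i ∩ B, b x ≤ ∑ _i : Fin d, δ := sum_le_sum fun i _ => hB _ (hP i)
    _ = d * δ := by simp
    _ ≤ w * δ := by gcongr; exact_mod_cast hd w hw

lemma fmax_le_fmax_of_maximal_blocks {S : Set (Finset ℕ)} (hS : IsLowerSet S)
    {B : ℕ → Finset ℕ} (hB : Successive B) (hne : ∀ j, (B j).Nonempty)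
    (hmax : ∀ j, IsMaximalIn S (B j)) {r : ℕ} {H : Fin r → Finset ℕ} (hH : ∀ i, H i ∈ S)
    (hHne : ∀ i, (H i).Nonempty) (hHsucc : Successive H) (hcov : ∀ i : Fin r, B i ⊆ univ.biUnion H)
    (i : Fin r) : fmax (H i) ≤ fmax (B i) := by
  induction i using WellFoundedLT.induction with
  | _ i ih =>
  by_contra! hlt
  have hsub : B i ⊆ H i := by
    intro y hy
    obtain ⟨i', -, hy'⟩ := mem_biUnion.1 (hcov i hy)
    rcases lt_trichotomy i' i with h | rfl | h
    · have := hB h _ (fmax_mem (hne i')) _ hy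
      have := (le_fmax hy').trans (ih i' h)
      omega
    · exact hy'
    · have := hHsucc h _ (fmax_mem (hHne i)) _ hy'
      have := le_fmax hy
      omega
  exact (hmax i).2 _ hlt (hS (insert_subset (fmax_mem (hHne i)) hsub) (hH i))

theorem isMaximalIn_biUnion_range {n : ℕ} {B : ℕ → Finset ℕ} (hB : Successive B)
    (hne : ∀ j, (B j).Nonempty) (hmax : ∀ j, IsMaximalIn (Schreier n) (B j))
    (hpos : 0 < fmin (B 0)) : IsMaximalIn (Schreier (n + 1)) ((range (fmin (B 0))).biUnion B) := by
  set F := (range (fmin (B 0))).biUnion B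
  have hBF : ∀ j < fmin (B 0), B j ⊆ F := fun j hj => subset_biUnion_of_mem B (mem_range.2 hj)
  refine ⟨biUnion_mem_schreier_succ _ (fun j _ => (hmax j).1) (fun j _ => hne j) hB ?_, ?_⟩
  · intro a ha
    obtain ⟨j, -, ha⟩ := mem_biUnion.1 ha
    simpa using hB.fmin_le (hne 0) ha
  rintro x hx ⟨r, H, hcov, hH, hHne, hHsucc, hr⟩
  have hr : r ≤ fmin (B 0) := hr _ (mem_insert_of_mem (hBF 0 hpos (fmin_mem (hne 0))))
  obtain ⟨i, -, hxi⟩ := mem_biUnion.1 (hcov ▸ mem_insert_self x F)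
  have hHB := fmax_le_fmax_of_maximal_blocks (isLowerSet_schreier n) hB hne hmax hH hHne
    (fun i j h => hHsucc i j h) (fun i => hcov ▸ (hBF i (by omega)).trans (subset_insert x F)) i
  have hBF' : fmax (B i) ≤ fmax F := sup_mono (hBF i (by omega))
  have := le_fmax hxi
  omega

def blockAverage (k : ℕ) (B : ℕ → Finset ℕ) (b : ℕ → ℕ → ℝ) (i : ℕ) : ℝ :=
  (k : ℝ)⁻¹ * ∑ j ∈ range k, if i ∈ B j then b j i else 0

section blockAverage

variable {k : ℕ} {B : ℕ → Finset ℕ} {b : ℕ → ℕ → ℝ}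

lemma blockAverage_eq (hB : Successive B) {i j : ℕ} (hj : j < k) (hi : i ∈ B j) :
    blockAverage k B b i = (k : ℝ)⁻¹ * b j i := by
  rw [blockAverage, sum_eq_single_of_mem j (mem_range.2 hj), if_pos hi]
  exact fun j' _ hj' => if_neg (disjoint_right.1 (hB.disjoint hj') hi)

lemma sum_blockAverage (hB : Successive B) {C : ℕ → Finset ℕ} (hC : ∀ j, C j ⊆ B j) :
    ∑ i ∈ (range k).biUnion C, blockAverage k B b i
      = (k : ℝ)⁻¹ * ∑ j ∈ range k, ∑ i ∈ C j, b j i := by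
  rw [sum_biUnion fun j _ j' _ h => (hB.disjoint h).mono (hC j) (hC j'), mul_sum]
  refine sum_congr rfl fun j hj => ?_
  rw [mul_sum]
  exact sum_congr rfl fun i hi => blockAverage_eq hB (mem_range.1 hj) (hC j hi)

end blockAverage

lemma sum_range_sum_inter_le_three {B : ℕ → Finset ℕ} {b : ℕ → ℕ → ℝ} (hB : Successive B)
    (hne : ∀ j, (B j).Nonempty) (hb : ∀ j, ∀ i ∈ B j, 0 ≤ b j i)
    (hsum : ∀ j, ∑ i ∈ B j, b j i = 1) {G : Finset ℕ}
    (hsmall : ∀ j, ∀ w ∈ G, w ≤ fmax (B j) → ∑ i ∈ G ∩ B (j + 1), b (j + 1) i ≤ (1 / 2) ^ (j + 1))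
    (k : ℕ) : ∑ j ∈ range k, ∑ i ∈ G ∩ B j, b j i ≤ 3 := by
  classical
  by_cases hG : ∃ j, (G ∩ B j).Nonempty
  swap
  · simp only [not_exists, not_nonempty_iff_eq_empty] at hG
    simp [hG]
  set j₀ := Nat.find hG
  obtain ⟨w, hw⟩ : (G ∩ B j₀).Nonempty := Nat.find_spec hG
  have key : ∀ j, ∑ i ∈ G ∩ B j, b j i ≤ (1 / 2) ^ j + if j = j₀ then 1 else 0 := by
    intro j
    rcases lt_trichotomy j j₀ with h | rfl | h
    · rw [not_nonempty_iff_eq_empty.1 (Nat.find_min hG h), sum_empty]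
      positivity
    · calc ∑ i ∈ G ∩ B j₀, b j₀ i ≤ ∑ i ∈ B j₀, b j₀ i :=
            sum_le_sum_of_subset_of_nonneg inter_subset_right fun i hi _ => hb _ i hi
        _ ≤ (1 / 2) ^ j₀ + 1 := by rw [hsum]; exact le_add_of_nonneg_left (by positivity)
        _ = _ := by rw [if_pos rfl]
    · obtain ⟨j, rfl⟩ := Nat.exists_eq_add_of_lt h
      have := hsmall (j₀ + j) w (mem_inter.1 hw).1
        ((le_fmax (mem_inter.1 hw).2).trans (hB.fmax_le_fmax hne (by omega)))
      rw [if_neg h.ne']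
      simpa using this
  calc ∑ j ∈ range k, ∑ i ∈ G ∩ B j, b j i
      ≤ ∑ j ∈ range k, ((1 / 2) ^ j + if j = j₀ then 1 else 0) := sum_le_sum fun j _ => key j
    _ = ∑ j ∈ range k, (1 / 2 : ℝ) ^ j + if j₀ ∈ range k then 1 else 0 := by
      rw [sum_add_distrib, sum_ite_eq']
    _ ≤ 2 + 1 := add_le_add (sum_geometric_two_le k) (by split_ifs <;> norm_num)
    _ = 3 := by norm_num

/-- A block of the construction: `δ` only bounds the weight of the `S_n`-sets reaching down to
`t`, which is all that the next level needs. -/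
structure IsBlock (n : ℕ) (L : Set ℕ) (t : ℕ) (δ : ℝ) (B : Finset ℕ) (b : ℕ → ℝ) : Prop where
  subset : ↑B ⊆ L
  lt_of_mem : ∀ x ∈ B, t < x
  maximal : IsMaximalIn (Schreier n) B
  weight_mem : ∀ i ∈ B, 0 ≤ b i ∧ b i ≤ 1
  sum_eq_one : ∑ i ∈ B, b i = 1
  sum_inter_le : ∀ G ∈ Schreier n, ∀ w ∈ G, w ≤ t → ∑ i ∈ G ∩ B, b i ≤ δ

lemma IsBlock.nonempty {n : ℕ} {L : Set ℕ} {t : ℕ} {δ : ℝ} {B : Finset ℕ} {b : ℕ → ℝ}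
    (h : IsBlock n L t δ B b) : B.Nonempty :=
  nonempty_of_sum_ne_zero (h.sum_eq_one ▸ one_ne_zero)

def HasBlocks (n : ℕ) : Prop :=
  ∀ L : Set ℕ, L.Infinite → ∀ (t : ℕ) (δ : ℝ), 0 < δ → ∃ B b, IsBlock n L t δ B b

/-- `(n + 1, ε)`-basic special convex combinations on maximal `S_{n+1}`-subsets. -/
def HasMaximalSCC (n : ℕ) : Prop :=
  ∀ ε : ℝ, 0 < ε → ∀ L : Set ℕ, L.Infinite → ∃ (F : Finset ℕ) (a : ℕ → ℝ),
    ↑F ⊆ L ∧ IsMaximalIn (Schreier (n + 1)) F ∧ (∀ i ∈ F, 0 ≤ a i ∧ a i ≤ 1) ∧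
    ∑ i ∈ F, a i = 1 ∧ ∀ G ∈ Schreier n, ∑ i ∈ G ∩ F, a i < ε

theorem hasBlocks_zero : HasBlocks 0 := by
  intro L hL t δ hδ
  obtain ⟨x, hxL, htx⟩ := hL.exists_gt t
  refine ⟨{x}, fun _ => 1, by simpa using hxL, by simpa using htx, ⟨by simp [Schreier], ?_⟩,
    by simp, by simp, fun G hG w hw hwt => ?_⟩
  · intro y hy hmem
    have hxy : y ≠ x := by simp [fmax] at hy; omega
    have := card_pair hxy
    simp only [Schreier, Set.mem_ofPred_eq] at hmem
    omega
  · have : G ∩ {x} = ∅ := by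
      refine eq_empty_of_forall_notMem fun y hy => ?_
      obtain ⟨hyG, hyx⟩ := mem_inter.1 hy
      have : y = w := card_le_one.1 hG y hyG w hw
      simp at hyx
      omega
    simpa [this] using hδ.le

theorem HasMaximalSCC.hasBlocks_succ {n : ℕ} (h : HasMaximalSCC n) : HasBlocks (n + 1) := by
  intro L hL t δ hδ
  obtain ⟨F, a, hFL, hmax, ha, hsum, hsmall⟩ :=
    h (δ / (t + 1)) (by positivity) (L \ Set.Iic t) (hL.sdiff (Set.finite_Iic t))
  refine ⟨F, a, fun x hx => (hFL hx).1, fun x hx => not_le.1 (hFL hx).2, hmax, ha, hsum,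
    fun G hG w hw hwt => ?_⟩
  have hwt : (w : ℝ) ≤ t := by exact_mod_cast hwt
  calc ∑ i ∈ G ∩ F, a i ≤ w * (δ / (t + 1)) :=
        sum_inter_le_of_mem_schreier_succ hG (by positivity) (fun P hP => (hsmall P hP).le) hw
    _ ≤ δ := by
      rw [mul_div_assoc', div_le_iff₀ (by positivity)]
      nlinarith [mul_le_mul_of_nonneg_right hwt hδ.le]

lemma HasBlocks.exists_seq_isBlock {n : ℕ} (h : HasBlocks n) {L : Set ℕ} (hL : L.Infinite)
    (N : ℕ) :
    ∃ (T : ℕ → ℕ) (B : ℕ → Finset ℕ) (b : ℕ → ℕ → ℝ), T 0 = N ∧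
      (∀ j, T (j + 1) = fmax (B j)) ∧ ∀ j, IsBlock n L (T j) ((1 / 2) ^ j) (B j) (b j) := by
  choose B b hB using fun t (j : ℕ) => h L hL t ((1 / 2) ^ j) (by positivity)
  let T : ℕ → ℕ := fun j => Nat.rec N (fun j t => fmax (B t j)) j
  exact ⟨T, fun j => B (T j) j, fun j => b (T j) j, rfl, fun _ => rfl, fun j => hB (T j) j⟩

theorem HasBlocks.hasMaximalSCC {n : ℕ} (h : HasBlocks n) : HasMaximalSCC n := by
  intro ε hε L hL
  obtain ⟨T, B, b, hT0, hT, hB⟩ := h.exists_seq_isBlock hL ⌈3 / ε⌉₊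
  have hne : ∀ j, (B j).Nonempty := fun j => (hB j).nonempty
  have hsucc : Successive B :=
    .of_fmax_lt hne fun j x hx => hT j ▸ (hB (j + 1)).lt_of_mem x hx
  set k := fmin (B 0)
  have hk : ⌈3 / ε⌉₊ < k := hT0 ▸ (hB 0).lt_of_mem _ (fmin_mem (hne 0))
  have hk1 : (1 : ℝ) ≤ k := by exact_mod_cast (show 1 ≤ k by omega)
  refine ⟨(range k).biUnion B, blockAverage k B b, ?_,
    isMaximalIn_biUnion_range hsucc hne (fun j => (hB j).maximal) (by omega), ?_, ?_,
    fun G hG => ?_⟩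
  · simpa using fun j _ => (hB j).subset
  · intro i hi
    obtain ⟨j, hj, hi⟩ := mem_biUnion.1 hi
    obtain ⟨hb0, hb1⟩ := (hB j).weight_mem i hi
    rw [blockAverage_eq hsucc (mem_range.1 hj) hi]
    exact ⟨by positivity, mul_le_one₀ (inv_le_one_of_one_le₀ hk1) hb0 hb1⟩
  · rw [sum_blockAverage hsucc fun j => subset_rfl]
    simp [fun j => (hB j).sum_eq_one, (zero_lt_one.trans_le hk1).ne']
  · rw [inter_biUnion, sum_blockAverage hsucc fun j => inter_subset_right]
    have hsmall := sum_range_sum_inter_le_three hsucc hne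
      (fun j i hi => ((hB j).weight_mem i hi).1) (fun j => (hB j).sum_eq_one)
      (fun j w hw hwB => (hB (j + 1)).sum_inter_le G hG w hw (hT j ▸ hwB)) k
    have h3 : 3 / ε < k := (Nat.le_ceil _).trans_lt (by exact_mod_cast hk)
    calc (k : ℝ)⁻¹ * ∑ j ∈ range k, ∑ i ∈ G ∩ B j, b j i ≤ (k : ℝ)⁻¹ * 3 := by gcongr
      _ < ε := by
        rw [div_lt_iff₀ hε] at h3
        rw [inv_mul_lt_iff₀ (by positivity)]
        linarith

theorem hasMaximalSCC : ∀ n, HasMaximalSCC n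
  | 0 => hasBlocks_zero.hasMaximalSCC
  | n + 1 => (hasMaximalSCC n).hasBlocks_succ.hasMaximalSCC

/-- For every `n ≥ 1`, `ε > 0` and infinite `L ⊆ ℕ` there is an `(n, ε)`-basic special
convex combination supported on a maximal `S_n`-subset `F` of `L`. -/
theorem exists_basic_scc_maximal (n : ℕ) (hn : 1 ≤ n) (ε : ℝ) (hε : 0 < ε)
    (L : Set ℕ) (hL : L.Infinite) :
    ∃ (F : Finset ℕ) (a : ℕ → ℝ),
      ↑F ⊆ L ∧
      F ∈ Schreier n ∧
      (∀ m ∈ L, fmax F < m → insert m F ∉ Schreier n) ∧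
      (∀ i ∈ F, 0 ≤ a i ∧ a i ≤ 1) ∧
      (∑ i ∈ F, a i) = 1 ∧
      (∀ G ∈ Schreier (n - 1), (∑ i ∈ G ∩ F, a i) < ε) := by
  obtain ⟨m, rfl⟩ : ∃ m, n = m + 1 := ⟨n - 1, by omega⟩
  obtain ⟨F, a, hFL, ⟨hF, hmax⟩, ha, hsum, hsmall⟩ := hasMaximalSCC m ε hε L hL
  exact ⟨F, a, hFL, hF, fun x _ hx => hmax x hx, ha, hsum, by simpa using hsmall⟩

end
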